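/- For R ∈ SO(3) with θ̂ = arctan2(R₁₃ − R₃₁, R₁₁ + R₃₃) and (R₁₃ − R₃₁, R₁₁ + R₃₃) ≠ (0,0), the minimal value of ‖R·S(θ) − I₃‖_F² over θ equals 6 − 2R₂₂ − 2√((R₁₁ + R₃₃)² + (R₁₃ − R₃₁)²). -/

import Mathlib

open Matrix

open Real

/-- Rotation about the y-axis by angle θ. -/
noncomputable def yrot (θ : ℝ) : Matrix (Fin 3) (Fin 3) ℝ :=
  !![cos θ, 0, -sin θ; 0, 1, 0; sin θ, 0, cos θ]

/-- Squared Frobenius norm of a 3×3 real matrix. -/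
noncomputable def frobSq (A : Matrix (Fin 3) (Fin 3) ℝ) : ℝ :=
  ∑ i, ∑ j, (A i j) ^ 2

/-- Two-argument arctangent with values in `(-π, π]`. -/
noncomputable def arctan2 (b a : ℝ) : ℝ := Complex.arg ⟨a, b⟩

/-!
Since `R * S(θ)` is orthogonal, `‖R S(θ) - I‖_F² = 6 - 2 tr (R S(θ))`, and
`tr (R S(θ)) = R₂₂ + a cos θ + b sin θ` with `a = R₁₁ + R₃₃`, `b = R₁₃ - R₃₁`.
By Cauchy–Schwarz `a cos θ + b sin θ ≤ √(a² + b²)`, with equality at `θ = arg (a + b i)`.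
-/

lemma frobSq_eq_trace_transpose_mul (A : Matrix (Fin 3) (Fin 3) ℝ) :
    frobSq A = trace (Aᵀ * A) := by
  simp only [frobSq, trace, diag_apply, mul_apply, transpose_apply, ← sq]
  exact Finset.sum_comm

lemma frobSq_sub_one_of_transpose_mul_self {A : Matrix (Fin 3) (Fin 3) ℝ} (hA : Aᵀ * A = 1) :
    frobSq (A - 1) = 6 - 2 * trace A := by
  have hexpand : (A - 1)ᵀ * (A - 1) = Aᵀ * A - A - Aᵀ + 1 := by
    simp only [transpose_sub, transpose_one, sub_mul, mul_sub, mul_one, one_mul]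
    abel
  rw [frobSq_eq_trace_transpose_mul, hexpand, hA]
  simp only [trace_add, trace_sub, trace_transpose, trace_one, Fintype.card_fin]
  push_cast
  ring

lemma yrot_transpose_mul_self (θ : ℝ) : (yrot θ)ᵀ * yrot θ = 1 := by
  ext i j
  fin_cases i <;> fin_cases j <;>
    simp [yrot, mul_apply, Fin.sum_univ_three, one_apply, ← sq, mul_comm (cos θ)]

lemma trace_mul_yrot (R : Matrix (Fin 3) (Fin 3) ℝ) (θ : ℝ) :
    trace (R * yrot θ) = R 1 1 + ((R 0 0 + R 2 2) * cos θ + (R 0 2 - R 2 0) * sin θ) := by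
  simp only [trace, yrot, diag_apply, mul_apply, of_apply, cons_val', cons_val_fin_one,
    Fin.sum_univ_three, Fin.isValue, cons_val_zero, cons_val_one, cons_val, mul_zero, add_zero,
    mul_one, zero_add, mul_neg]
  ring

lemma frobSq_mul_yrot_sub_one {R : Matrix (Fin 3) (Fin 3) ℝ} (hR : Rᵀ * R = 1) (θ : ℝ) :
    frobSq (R * yrot θ - 1) =
      6 - 2 * R 1 1 - 2 * ((R 0 0 + R 2 2) * cos θ + (R 0 2 - R 2 0) * sin θ) := by
  have horth : (R * yrot θ)ᵀ * (R * yrot θ) = 1 := by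
    rw [transpose_mul, Matrix.mul_assoc, ← Matrix.mul_assoc Rᵀ, hR, Matrix.one_mul,
      yrot_transpose_mul_self]
  rw [frobSq_sub_one_of_transpose_mul_self horth, trace_mul_yrot]
  ring

lemma mul_cos_add_mul_sin_le_sqrt (a b θ : ℝ) : a * cos θ + b * sin θ ≤ √(a ^ 2 + b ^ 2) := by
  refine (le_abs_self _).trans (Real.abs_le_sqrt ?_)
  nlinarith [sq_nonneg (a * sin θ - b * cos θ), sin_sq_add_cos_sq θ]

lemma mul_cos_arctan2_add_mul_sin_arctan2 (a b : ℝ) :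
    a * cos (arctan2 b a) + b * sin (arctan2 b a) = √(a ^ 2 + b ^ 2) := by
  have hnorm : ‖(⟨a, b⟩ : ℂ)‖ = √(a ^ 2 + b ^ 2) := by
    rw [Complex.norm_def, Complex.normSq_mk, sq, sq]
  have hre : ‖(⟨a, b⟩ : ℂ)‖ * cos (arctan2 b a) = a := Complex.norm_mul_cos_arg _
  have him : ‖(⟨a, b⟩ : ℂ)‖ * sin (arctan2 b a) = b := Complex.norm_mul_sin_arg _
  rw [← hnorm]
  linear_combination -cos (arctan2 b a) * hre - sin (arctan2 b a) * him
    + ‖(⟨a, b⟩ : ℂ)‖ * sin_sq_add_cos_sq (arctan2 b a)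

theorem min_value_frobSq_general (R : Matrix (Fin 3) (Fin 3) ℝ)
    (hR : Rᵀ * R = 1 ∧ R.det = 1) :
    (∀ θ : ℝ,
      6 - 2 * R 1 1 - 2 * Real.sqrt ((R 0 0 + R 2 2) ^ 2 + (R 0 2 - R 2 0) ^ 2) ≤
        frobSq (R * yrot θ - 1)) ∧
    frobSq (R * yrot (arctan2 (R 0 2 - R 2 0) (R 0 0 + R 2 2)) - 1) =
      6 - 2 * R 1 1 - 2 * Real.sqrt ((R 0 0 + R 2 2) ^ 2 + (R 0 2 - R 2 0) ^ 2) := by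
  refine ⟨fun θ => ?_, ?_⟩
  · rw [frobSq_mul_yrot_sub_one hR.1]
    linarith [mul_cos_add_mul_sin_le_sqrt (R 0 0 + R 2 2) (R 0 2 - R 2 0) θ]
  · rw [frobSq_mul_yrot_sub_one hR.1, mul_cos_arctan2_add_mul_sin_arctan2]

theorem min_value_frobSq (R : Matrix (Fin 3) (Fin 3) ℝ)
    (hR : Rᵀ * R = 1 ∧ R.det = 1)
    (hab : ¬(R 0 2 - R 2 0 = 0 ∧ R 0 0 + R 2 2 = 0)) :
    (∀ θ : ℝ,
      6 - 2 * R 1 1 - 2 * Real.sqrt ((R 0 0 + R 2 2) ^ 2 + (R 0 2 - R 2 0) ^ 2) ≤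
        frobSq (R * yrot θ - 1)) ∧
    frobSq (R * yrot (arctan2 (R 0 2 - R 2 0) (R 0 0 + R 2 2)) - 1) =
      6 - 2 * R 1 1 - 2 * Real.sqrt ((R 0 0 + R 2 2) ^ 2 + (R 0 2 - R 2 0) ^ 2) :=
  min_value_frobSq_general R hR
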